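/- arXiv:1403.7495 — 7 statements merged into one kernel-verified Lean document; each statement's English description precedes it below -/
import Mathlib

section
/- If a graph G admits an S-packing coloring for a non-decreasing sequence S = (s_1, ..., s_k) of positive integers, then the subdivision S(G) of G (obtained by replacing each edge with a path of length two) admits a (1, 2s_1+1, ..., 2s_k+1)-packing coloring. -/
/-- An `S`-packing coloring: a map `c : V → Fin k` such that any two distinct
vertices with the same color `i` are at distance greater than `s i`. -/
def SPacking {V : Type*} (G : SimpleGraph V) (k : ℕ) (s : Fin k → ℕ) : Prop :=
  ∃ c : V → Fin k, ∀ u v : V, u ≠ v → c u = c v → G.Reachable u v → s (c u) < G.dist u v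

/-- The subdivision of `G`: each edge is replaced by a path of length two
through a new (subdivision) vertex. -/
def Subdiv {V : Type*} (G : SimpleGraph V) : SimpleGraph (V ⊕ G.edgeSet) :=
  SimpleGraph.fromRel (fun a b => ∃ (v : V) (e : G.edgeSet),
    a = Sum.inl v ∧ b = Sum.inr e ∧ v ∈ (e : Sym2 V))

lemma subdiv_adj_inl {V : Type*} {G : SimpleGraph V} {u : V} {x : V ⊕ G.edgeSet}
    (h : (Subdiv G).Adj (Sum.inl u) x) :
    ∃ e : G.edgeSet, x = Sum.inr e ∧ u ∈ (e : Sym2 V) := by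
  obtain ⟨hne, h | h⟩ := h
  · obtain ⟨v, e, hv, he, hm⟩ := h
    injection hv with hv
    subst hv
    exact ⟨e, he, hm⟩
  · obtain ⟨v, e, hv, he, hm⟩ := h
    exact absurd he (by simp)

lemma subdiv_adj_inr {V : Type*} {G : SimpleGraph V} {e : G.edgeSet} {y : V ⊕ G.edgeSet}
    (h : (Subdiv G).Adj (Sum.inr e) y) :
    ∃ w : V, y = Sum.inl w ∧ w ∈ (e : Sym2 V) := by
  obtain ⟨hne, h | h⟩ := h
  · obtain ⟨v, e', hv, he, hm⟩ := h
    exact absurd hv (by simp)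
  · obtain ⟨v, e', hv, he, hm⟩ := h
    injection he with he
    subst he
    exact ⟨v, hv, hm⟩

lemma subdiv_not_adj_inr {V : Type*} {G : SimpleGraph V} {e e' : G.edgeSet}
    (h : (Subdiv G).Adj (Sum.inr e) (Sum.inr e')) : False := by
  obtain ⟨w, hw, -⟩ := subdiv_adj_inr h
  exact absurd hw (by simp)

lemma walk_half {V : Type*} {G : SimpleGraph V} :
    ∀ n : ℕ, ∀ (a b : V ⊕ G.edgeSet) (W : (Subdiv G).Walk a b), W.length = n →
      ∀ u v : V, a = Sum.inl u → b = Sum.inl v →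
      ∃ P : G.Walk u v, 2 * P.length ≤ n := by
  intro n
  induction n using Nat.strong_induction_on with
  | _ n ih =>
    intro a b W hlen u v ha hb
    cases W with
    | nil =>
        subst ha; injection hb with hb; subst hb
        exact ⟨SimpleGraph.Walk.nil, by
          simp only [SimpleGraph.Walk.length_nil] at hlen ⊢; omega⟩
    | @cons _ x _ hadj W' =>
        subst ha
        obtain ⟨e, hx, hue⟩ := subdiv_adj_inl hadj
        subst hx
        cases W' with
        | nil => exact absurd hb (by simp)
        | @cons _ y _ hadj' W'' =>
            obtain ⟨w, hy, hwe⟩ := subdiv_adj_inr hadj'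
            subst hy
            simp only [SimpleGraph.Walk.length_cons] at hlen
            obtain ⟨P', hP'⟩ := ih W''.length (by omega) _ _ W'' rfl w v rfl hb
            by_cases huw : u = w
            · subst huw
              exact ⟨P', by omega⟩
            · have hadj'' : G.Adj u w := by
                have : (e : Sym2 V) = s(u, w) := (Sym2.mem_and_mem_iff huw).mp ⟨hue, hwe⟩
                have he2 := e.2
                rw [this] at he2
                exact G.mem_edgeSet.mp he2
              exact ⟨SimpleGraph.Walk.cons hadj'' P', by
                simp only [SimpleGraph.Walk.length_cons]; omega⟩

theorem stmt_0 {V : Type*} (G : SimpleGraph V) (k : ℕ) (s : Fin k → ℕ)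
    (hmono : Monotone s) (hpos : ∀ i, 0 < s i) (h : SPacking G k s) :
    SPacking (Subdiv G) (k + 1) (Fin.cons 1 fun i => 2 * s i + 1) := by
  obtain ⟨c, hc⟩ := h
  refine ⟨Sum.elim (fun v => (c v).succ) (fun _ => 0), ?_⟩
  rintro (u | e) (v | e') hne hcol hreach
  · -- inl, inl
    simp only [Sum.elim_inl] at hcol ⊢
    have hcuv : c u = c v := Fin.succ_injective _ hcol
    rw [Fin.cons_succ]
    have hne' : u ≠ v := fun h => hne (by rw [h])
    obtain ⟨W, hW⟩ := hreach.exists_walk_length_eq_dist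
    obtain ⟨P, hP⟩ := walk_half _ _ _ W rfl u v rfl rfl
    have hreach' : G.Reachable u v := P.reachable
    have h1 : s (c u) < G.dist u v := hc u v hne' hcuv hreach'
    have h2 : G.dist u v ≤ P.length := G.dist_le P
    omega
  · exact absurd hcol (by simp [Fin.succ_ne_zero])
  · exact absurd hcol (by simp [(Fin.succ_ne_zero _).symm])
  · simp only [Sum.elim_inr, Fin.cons_zero]
    have hd0 : 0 < (Subdiv G).dist (Sum.inr e) (Sum.inr e') := hreach.pos_dist_of_ne hne
    have hd1 : (Subdiv G).dist (Sum.inr e) (Sum.inr e') ≠ 1 := by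
      intro h1
      exact subdiv_not_adj_inr (SimpleGraph.dist_eq_one_iff_adj.mp h1)
    omega
end

section
/- The subdivision S(K_4) of the complete graph K_4 admits a (1,3,3,3)-packing coloring. -/
namespace SDK4Helper

def col : Sym2 (Fin 4) → Fin 4 :=
  Sym2.lift ⟨fun a b => ⟨(a.val ^^^ b.val) % 4, Nat.mod_lt _ (by norm_num)⟩,
    fun a b => by simp [Nat.xor_comm]⟩

lemma ndiag : ∀ e : Sym2 (Fin 4), ¬e.IsDiag → col e ≠ 0 := by decide

lemma disj : ∀ e f : Sym2 (Fin 4), e ≠ f → col e = col f →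
    ∀ v : Fin 4, v ∈ e → v ∉ f := by decide

lemma walk_bound {V : Type*} {G : SimpleGraph V} (g : V → ℕ)
    (h : ∀ x y, G.Adj x y → g y ≤ g x + 1) {u v : V} (p : G.Walk u v) :
    g v ≤ g u + p.length := by
  induction p with
  | nil => simp
  | cons ha p ih =>
    have := h _ _ ha
    simp only [SimpleGraph.Walk.length_cons]
    omega

lemma lt_dist {V : Type*} {G : SimpleGraph V} {u v : V} (h : G.Reachable u v) (n : ℕ)
    (hw : ∀ p : G.Walk u v, n < p.length) : n < G.dist u v := by
  obtain ⟨p, hp⟩ := h.exists_walk_length_eq_dist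
  rw [← hp]; exact hw p

lemma subdiv_adj {x y : Fin 4 ⊕ (⊤ : SimpleGraph (Fin 4)).edgeSet}
    (h : (Subdiv (⊤ : SimpleGraph (Fin 4))).Adj x y) :
    ∃ (v : Fin 4) (e : (⊤ : SimpleGraph (Fin 4)).edgeSet),
      ((x = Sum.inl v ∧ y = Sum.inr e) ∨ (y = Sum.inl v ∧ x = Sum.inr e)) ∧
        v ∈ (e : Sym2 (Fin 4)) := by
  rw [Subdiv, SimpleGraph.fromRel_adj] at h
  obtain ⟨-, h | h⟩ := h
  · obtain ⟨v, e, h1, h2, h3⟩ := h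
    exact ⟨v, e, Or.inl ⟨h1, h2⟩, h3⟩
  · obtain ⟨v, e, h1, h2, h3⟩ := h
    exact ⟨v, e, Or.inr ⟨h1, h2⟩, h3⟩

end SDK4Helper

theorem stmt_2 : SPacking (Subdiv (⊤ : SimpleGraph (Fin 4))) 4 ![1, 3, 3, 3] := by
  classical
  open SDK4Helper in
  refine ⟨Sum.elim (fun _ => 0) (fun e => col e.val), ?_⟩
  intro u v hne hcol hreach
  have hle : ∀ i : Fin 4, (![1, 3, 3, 3] : Fin 4 → ℕ) i ≤ 3 := by decide
  match u, v with
  | Sum.inl a, Sum.inl b =>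
    -- colors both 0, need 1 < dist
    show (1 : ℕ) < (Subdiv (⊤ : SimpleGraph (Fin 4))).dist (Sum.inl a) (Sum.inl b)
    have hab : a ≠ b := by simpa using hne
    have : 1 < (Subdiv (⊤ : SimpleGraph (Fin 4))).dist (Sum.inl a) (Sum.inl b) := by
      refine SDK4Helper.lt_dist hreach 1 (fun p => ?_)
      have hb := SDK4Helper.walk_bound
        (Sum.elim (fun w => if w = a then 0 else 2) (fun _ => 1)) ?lip p
      · simp [Ne.symm hab] at hb
        omega
      case lip =>
        intro x y hadj
        obtain ⟨w, e, hcase, -⟩ := SDK4Helper.subdiv_adj hadj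
        rcases hcase with ⟨hx, hy⟩ | ⟨hy, hx⟩ <;> subst hx <;> subst hy <;>
          simp only [Sum.elim_inl, Sum.elim_inr] <;> split <;> omega
    exact this
  | Sum.inl a, Sum.inr f =>
    exfalso
    have hf : ¬ (f : Sym2 (Fin 4)).IsDiag :=
      SimpleGraph.not_isDiag_of_mem_edgeSet _ f.2
    have := SDK4Helper.ndiag f.val hf
    simp only [Sum.elim_inl, Sum.elim_inr] at hcol
    exact this hcol.symm
  | Sum.inr e, Sum.inl b =>
    exfalso
    have hf : ¬ (e : Sym2 (Fin 4)).IsDiag :=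
      SimpleGraph.not_isDiag_of_mem_edgeSet _ e.2
    have := SDK4Helper.ndiag e.val hf
    simp only [Sum.elim_inl, Sum.elim_inr] at hcol
    exact this hcol
  | Sum.inr e, Sum.inr f =>
    simp only [Sum.elim_inr] at hcol ⊢
    have hef : (e : Sym2 (Fin 4)) ≠ (f : Sym2 (Fin 4)) := by
      intro h; exact hne (by simp [Subtype.ext h])
    have hdisj := SDK4Helper.disj e.val f.val hef hcol
    have hdist : 3 < (Subdiv (⊤ : SimpleGraph (Fin 4))).dist (Sum.inr e) (Sum.inr f) := by
      refine SDK4Helper.lt_dist hreach 3 (fun p => ?_)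
      set g : Fin 4 ⊕ (⊤ : SimpleGraph (Fin 4)).edgeSet → ℕ :=
        Sum.elim (fun w => if w ∈ (e : Sym2 (Fin 4)) then 1 else 3)
          (fun e' => if e' = e then 0 else if e' = f then 4 else 2) with hg
      have hb := SDK4Helper.walk_bound g ?lip p
      · have hfe : f ≠ e := fun h => hef (by rw [h])
        simp [hg, hfe] at hb
        omega
      case lip =>
        intro x y hadj
        obtain ⟨w, e', hcase, hmem⟩ := SDK4Helper.subdiv_adj hadj
        have key : ∀ z1 z2 : ℕ,
            z1 = g (Sum.inl w) → z2 = g (Sum.inr e') →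
            (z2 ≤ z1 + 1 ∧ z1 ≤ z2 + 1) := by
          intro z1 z2 h1 h2
          simp only [hg, Sum.elim_inl, Sum.elim_inr] at h1 h2
          by_cases he : e' = e
          · subst he
            rw [if_pos rfl] at h2
            rw [if_pos hmem] at h1
            omega
          · rw [if_neg he] at h2
            by_cases hfcase : e' = f
            · subst hfcase
              rw [if_pos rfl] at h2
              have : w ∉ (e : Sym2 (Fin 4)) := fun hw => hdisj w hw hmem
              rw [if_neg this] at h1
              omega
            · rw [if_neg hfcase] at h2
              split at h1 <;> omega
        rcases hcase with ⟨hx, hy⟩ | ⟨hy, hx⟩ <;> subst hx <;> subst hy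
        · exact (key _ _ rfl rfl).1
        · exact (key _ _ rfl rfl).2
    exact lt_of_le_of_lt (hle _) hdist
end

section
/- Every finite subcubic graph admits a (1,2,2,2,2,2,2)-packing coloring, i.e. its vertex set can be partitioned into one independent set and six sets each of which is a 2-packing (vertices at pairwise distance at least 3). -/
set_option linter.unusedSectionVars false
set_option linter.unusedVariables false
set_option maxHeartbeats 1000000

namespace PackingSub
open Finset SimpleGraph
attribute [local instance] Classical.propDecidable
variable {V : Type*} [Fintype V] [DecidableEq V] (G : SimpleGraph V) [DecidableRel G.Adj]

def Hadj (I : Finset V) (u v : V) : Prop :=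
  u ∉ I ∧ v ∉ I ∧ u ≠ v ∧ (G.Adj u v ∨ ∃ w, G.Adj u w ∧ G.Adj w v)

lemma Hadj_symm {I : Finset V} {u v : V} (h : Hadj G I u v) : Hadj G I v u := by
  obtain ⟨h1, h2, h3, h4⟩ := h
  refine ⟨h2, h1, h3.symm, ?_⟩
  rcases h4 with h | ⟨w, hw1, hw2⟩
  · exact Or.inl h.symm
  · exact Or.inr ⟨w, hw2.symm, hw1.symm⟩

def contrib (I : Finset V) (v x : V) : Finset V :=
  if x ∈ I then G.neighborFinset x \ {v}
  else insert x ((G.neighborFinset x).filter (fun y => y ∉ I) \ {v})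

lemma hnbr_subset (I : Finset V) (d : V) :
    univ.filter (fun y => Hadj G I d y) ⊆ (G.neighborFinset d).biUnion (contrib G I d) := by
  intro y hy
  rw [mem_filter] at hy
  obtain ⟨-, hdI, hyI, hne, hcase⟩ := hy
  rw [mem_biUnion]
  rcases hcase with hadj | ⟨w, hw1, hw2⟩
  · refine ⟨y, (mem_neighborFinset _ _ _).mpr hadj, ?_⟩
    rw [contrib, if_neg hyI]
    exact mem_insert_self _ _
  · refine ⟨w, (mem_neighborFinset _ _ _).mpr hw1, ?_⟩
    rw [contrib]
    by_cases hwI : w ∈ I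
    · rw [if_pos hwI, mem_sdiff, mem_neighborFinset, mem_singleton]
      exact ⟨hw2, fun h => hne h.symm⟩
    · rw [if_neg hwI]
      by_cases hyw : y = w
      · subst hyw; exact mem_insert_self _ _
      · refine mem_insert_of_mem ?_
        rw [mem_sdiff, mem_filter, mem_neighborFinset, mem_singleton]
        exact ⟨⟨hw2, hyI⟩, fun h => hne h.symm⟩

lemma contrib_card_le {I : Finset V} {d x : V} (hdx : G.Adj d x) (hdI : d ∉ I)
    (hdeg3 : ∀ v, G.degree v ≤ 3) (hmax : ∀ v, v ∉ I → ∃ w ∈ I, G.Adj v w) :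
    (contrib G I d x).card ≤ 2 := by
  rw [contrib]
  by_cases hxI : x ∈ I
  · rw [if_pos hxI]
    have hd : d ∈ G.neighborFinset x := (mem_neighborFinset _ _ _).mpr hdx.symm
    have : (G.neighborFinset x \ {d}).card ≤ 3 - 1 := by
      rw [card_sdiff_of_subset (by simpa using hd)]
      simp only [card_singleton]
      exact Nat.sub_le_sub_right (hdeg3 x) 1
    omega
  · rw [if_neg hxI]
    obtain ⟨w, hwI, hxw⟩ := hmax x hxI
    have hwd : w ≠ d := fun h => hdI (h ▸ hwI)
    have hsub : (G.neighborFinset x).filter (fun y => y ∉ I) \ {d}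
        ⊆ (G.neighborFinset x) \ {w, d} := by
      intro y hy
      rw [mem_sdiff, mem_filter] at hy
      rw [mem_sdiff, mem_insert, mem_singleton]
      refine ⟨hy.1.1, ?_⟩
      rintro (rfl | rfl)
      · exact hy.1.2 hwI
      · exact hy.2 (mem_singleton_self _)
    have h2 : ({w, d} : Finset V) ⊆ G.neighborFinset x := by
      intro y hy
      rw [mem_insert, mem_singleton] at hy
      rcases hy with rfl | rfl
      · exact (mem_neighborFinset _ _ _).mpr hxw
      · exact (mem_neighborFinset _ _ _).mpr hdx.symm
    have hcard2 : ({w, d} : Finset V).card = 2 := by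
      rw [card_insert_of_notMem (by simpa using hwd), card_singleton]
    have := card_le_card hsub
    rw [card_sdiff_of_subset h2, hcard2] at this
    have h3 : (G.neighborFinset x).card ≤ 3 := hdeg3 x
    calc (insert x ((G.neighborFinset x).filter (fun y => y ∉ I) \ {d})).card
        ≤ _ + 1 := card_insert_le _ _
      _ ≤ 2 := by omega

lemma card3_extract {s : Finset V} (h : s.card = 3) {a b : V} (ha : a ∈ s) (hb : b ∈ s)
    (hab : a ≠ b) : ∃ t, t ≠ a ∧ t ≠ b ∧ s = {a, b, t} := by
  have h1 : ((s.erase a).erase b).card = 1 := by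
    rw [card_erase_of_mem (mem_erase.mpr ⟨hab.symm, hb⟩), card_erase_of_mem ha, h]
  obtain ⟨t, ht⟩ := card_eq_one.mp h1
  have htm : t ∈ (s.erase a).erase b := ht ▸ mem_singleton_self t
  rw [mem_erase, mem_erase] at htm
  refine ⟨t, htm.2.1, htm.1, ?_⟩
  have hsub : ({a, b, t} : Finset V) ⊆ s := by
    intro y hy
    simp only [mem_insert, mem_singleton] at hy
    rcases hy with rfl | rfl | rfl
    · exact ha
    · exact hb
    · exact htm.2.2
  have hna : a ∉ ({b, t} : Finset V) := by
    simp only [mem_insert, mem_singleton]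
    exact fun hc => hc.elim hab (fun h' => htm.2.1 h'.symm)
  have hnb : b ∉ ({t} : Finset V) := by
    simp only [mem_singleton]
    exact fun h' => htm.1 h'.symm
  have hcard : 3 ≤ ({a, b, t} : Finset V).card := by
    rw [card_insert_of_notMem hna, card_insert_of_notMem hnb, card_singleton]
  exact (Finset.eq_of_subset_of_card_le hsub (le_trans (le_of_eq h) hcard)).symm

lemma walk_closure {R : V → Prop} (hcl : ∀ a b, R a → G.Adj a b → R b) {u v : V}
    (h : G.Reachable u v) (hu : R u) : R v := by
  obtain ⟨p⟩ := h
  induction p with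
  | nil => exact hu
  | cons hadj q ih => exact ih (hcl _ _ hu hadj)

lemma nbr_of_reachable_ne {u v : V} (h : G.Reachable u v) (hne : v ≠ u) :
    ∃ y, G.Adj v y := by
  obtain ⟨p⟩ := h.symm
  cases p with
  | nil => exact absurd rfl hne
  | cons hadj q => exact ⟨_, hadj⟩

lemma dist_gt_two {u v : V} (h1 : u ≠ v) (h2 : G.Reachable u v) (h3 : ¬G.Adj u v)
    (h4 : ∀ w, ¬(G.Adj u w ∧ G.Adj w v)) : 2 < G.dist u v := by
  obtain ⟨p, hp⟩ := h2.exists_walk_length_eq_dist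
  by_contra hle
  push_neg at hle
  rw [← hp] at hle
  cases p with
  | nil => exact h1 rfl
  | cons hadj q =>
    cases q with
    | nil => exact h3 hadj
    | cons hadj2 r =>
      simp only [Walk.length_cons] at hle
      have : r.length = 0 := by omega
      have := SimpleGraph.Walk.eq_of_length_eq_zero this
      subst this
      exact h4 _ ⟨hadj, hadj2⟩

lemma dist_gt_one {u v : V} (h1 : u ≠ v) (h2 : G.Reachable u v) (h3 : ¬G.Adj u v) :
    1 < G.dist u v := by
  obtain ⟨p, hp⟩ := h2.exists_walk_length_eq_dist
  by_contra hle
  push_neg at hle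
  rw [← hp] at hle
  cases p with
  | nil => exact h1 rfl
  | cons hadj q =>
    simp only [Walk.length_cons] at hle
    have : q.length = 0 := by omega
    have := SimpleGraph.Walk.eq_of_length_eq_zero this
    subst this
    exact h3 hadj

lemma card3_extract' {s : Finset V} (h : s.card = 3) {a : V} (ha : a ∈ s) :
    ∃ b c, b ≠ a ∧ c ≠ a ∧ b ≠ c ∧ s = {a, b, c} := by
  have h1 : (s.erase a).card = 2 := by rw [card_erase_of_mem ha, h]
  obtain ⟨b, c, hbc, hbceq⟩ := card_eq_two.mp h1
  have hbm : b ∈ s.erase a := hbceq ▸ mem_insert_self _ _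
  have hcm : c ∈ s.erase a := hbceq ▸ mem_insert_of_mem (mem_singleton_self _)
  rw [mem_erase] at hbm hcm
  refine ⟨b, c, hbm.1, hcm.1, hbc, ?_⟩
  have : s = insert a (s.erase a) := (insert_erase ha).symm
  rw [this, hbceq]

lemma extend_indep (A W : Finset V) (hAW : A ⊆ W)
    (hAind : ∀ a ∈ A, ∀ b ∈ A, ¬G.Adj a b) :
    ∃ I : Finset V, A ⊆ I ∧ I ⊆ W ∧ (∀ a ∈ I, ∀ b ∈ I, ¬G.Adj a b) ∧
      ∀ x ∈ W, x ∉ I → ∃ y ∈ I, G.Adj x y := by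
  set P : Finset V → Prop :=
    fun J => A ⊆ J ∧ J ⊆ W ∧ ∀ a ∈ J, ∀ b ∈ J, ¬G.Adj a b with hP
  set cands : Finset (Finset V) := univ.filter P with hcands
  have hA : A ∈ cands := by
    rw [hcands, mem_filter]
    exact ⟨mem_univ _, le_refl _, hAW, hAind⟩
  obtain ⟨I, hIc, hImax⟩ := cands.exists_max_image card ⟨A, hA⟩
  rw [hcands, mem_filter] at hIc
  obtain ⟨-, hIA, hIW, hIind⟩ := hIc
  refine ⟨I, hIA, hIW, hIind, ?_⟩
  intro x hxW hxI
  by_contra hno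
  push_neg at hno
  have hcand : insert x I ∈ cands := by
    rw [hcands, mem_filter]
    refine ⟨mem_univ _, le_trans hIA (subset_insert _ _), ?_, ?_⟩
    · intro y hy
      rcases mem_insert.mp hy with rfl | hy
      · exact hxW
      · exact hIW hy
    · intro a ha b hb hadj
      rcases mem_insert.mp ha with ha' | ha'
      · rcases mem_insert.mp hb with hb' | hb'
        · rw [ha', hb'] at hadj; exact G.irrefl hadj
        · rw [ha'] at hadj; exact hno b hb' hadj
      · rcases mem_insert.mp hb with hb' | hb'
        · rw [hb'] at hadj; exact hno a ha' hadj.symm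
        · exact hIind a ha' b hb' hadj
  have := hImax _ hcand
  rw [card_insert_of_notMem hxI] at this
  omega

lemma sixcolor (I : Finset V)
    (hdeg : ∀ S : Finset V, S.Nonempty → (∀ v ∈ S, v ∉ I) →
      ∃ d ∈ S, (S.filter (fun y => Hadj G I d y)).card ≤ 5) :
    ∀ S : Finset V, (∀ v ∈ S, v ∉ I) →
      ∃ g : V → Fin 6, ∀ u ∈ S, ∀ v ∈ S, Hadj G I u v → g u ≠ g v := by
  intro S
  induction S using Finset.strongInduction with
  | _ S ih =>
    intro hSF
    rcases S.eq_empty_or_nonempty with rfl | hne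
    · exact ⟨fun _ => 0, by simp⟩
    obtain ⟨d, hdS, hd5⟩ := hdeg S hne hSF
    have hS' : S.erase d ⊂ S := erase_ssubset hdS
    obtain ⟨g, hg⟩ := ih _ hS' (fun v hv => hSF v (mem_of_mem_erase hv))
    set T : Finset (Fin 6) := ((S.filter (fun y => Hadj G I d y)).erase d).image g with hT
    have hTcard : T.card < 6 := by
      calc T.card ≤ ((S.filter (fun y => Hadj G I d y)).erase d).card := card_image_le
        _ ≤ (S.filter (fun y => Hadj G I d y)).card := card_erase_le
        _ ≤ 5 := hd5
        _ < 6 := by omega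
    have hex : ∃ k : Fin 6, k ∉ T := by
      by_contra hall
      push_neg at hall
      have : (univ : Finset (Fin 6)) ⊆ T := fun k _ => hall k
      have := card_le_card this
      simp only [card_univ, Fintype.card_fin] at this
      omega
    obtain ⟨k, hk⟩ := hex
    refine ⟨fun x => if x = d then k else g x, ?_⟩
    intro u hu v hv huv
    by_cases hud : u = d <;> by_cases hvd : v = d
    · subst hud; subst hvd; exact absurd rfl huv.2.2.1
    · subst hud
      simp only [if_pos rfl, if_neg hvd]
      intro heq
      apply hk
      rw [hT, mem_image]
      exact ⟨v, mem_erase.mpr ⟨hvd, mem_filter.mpr ⟨hv, huv⟩⟩, heq.symm⟩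
    · subst hvd
      simp only [if_neg hud, if_pos rfl]
      intro heq
      apply hk
      rw [hT, mem_image]
      exact ⟨u, mem_erase.mpr ⟨hud, mem_filter.mpr ⟨hu, Hadj_symm G huv⟩⟩, heq⟩
    · simp only [if_neg hud, if_neg hvd]
      exact hg u (mem_erase.mpr ⟨hud, hu⟩) v (mem_erase.mpr ⟨hvd, hv⟩) huv

lemma main_degen (I : Finset V) (hdeg3 : ∀ v, G.degree v ≤ 3)
    (hind : ∀ a ∈ I, ∀ b ∈ I, ¬G.Adj a b)
    (hmax : ∀ v, v ∉ I → ∃ w ∈ I, G.Adj v w)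
    (hdefect : ∀ c : G.ConnectedComponent,
      (∀ x, G.connectedComponentMk x = c → G.degree x = 3) →
      ∃ d, G.connectedComponentMk d = c ∧ d ∉ I ∧
        (univ.filter (fun y => Hadj G I d y)).card ≤ 5) :
    ∀ S : Finset V, S.Nonempty → (∀ v ∈ S, v ∉ I) →
      ∃ d ∈ S, (S.filter (fun y => Hadj G I d y)).card ≤ 5 := by
  intro S hne hSF
  by_contra hcon
  push_neg at hcon
  have key : ∀ v ∈ S, G.degree v = 3
      ∧ (∀ w ∈ I, G.Adj v w → (G.neighborFinset w \ {v}) ⊆ S ∧ G.degree w = 3)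
      ∧ (∀ a, G.Adj v a → a ∉ I → a ∈ S) := by
    intro v hv
    have hvI : v ∉ I := hSF v hv
    set Nv := G.neighborFinset v with hNv
    set U := Nv.biUnion (contrib G I v) with hU
    set T := S.filter (fun y => Hadj G I v y) with hTdef
    have hTU : T ⊆ U := by
      intro y hy
      apply hnbr_subset G I v
      rw [mem_filter] at hy ⊢
      exact ⟨mem_univ _, hy.2⟩
    have hT6 : 6 ≤ T.card := hcon v hv
    have hUle : U.card ≤ ∑ x ∈ Nv, (contrib G I v x).card := card_biUnion_le
    have hclt : ∀ x ∈ Nv, (contrib G I v x).card ≤ 2 := by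
      intro x hx
      exact contrib_card_le G ((mem_neighborFinset _ _ _).mp hx) hvI hdeg3 hmax
    have hsum_le : ∑ x ∈ Nv, (contrib G I v x).card ≤ 2 * Nv.card := by
      calc ∑ x ∈ Nv, (contrib G I v x).card ≤ ∑ _x ∈ Nv, 2 := sum_le_sum hclt
        _ = 2 * Nv.card := by rw [sum_const, smul_eq_mul, mul_comm]
    have hTle : T.card ≤ U.card := card_le_card hTU
    have hNvdeg : Nv.card = G.degree v := rfl
    have hdv := hdeg3 v
    have hNv3 : Nv.card = 3 := by omega
    have hU6 : U.card ≤ 6 := by omega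
    have hTeq : T = U := eq_of_subset_of_card_le hTU (by omega)
    have hUS : U ⊆ S := by rw [← hTeq]; exact filter_subset _ _
    have hc2 : ∀ x ∈ Nv, (contrib G I v x).card = 2 := by
      intro x hx
      have hsum6 : 6 ≤ ∑ y ∈ Nv, (contrib G I v y).card := by omega
      have hadd : (contrib G I v x).card + ∑ y ∈ Nv.erase x, (contrib G I v y).card
          = ∑ y ∈ Nv, (contrib G I v y).card := add_sum_erase Nv (fun y => (contrib G I v y).card) hx
      have herase : ∑ y ∈ Nv.erase x, (contrib G I v y).card ≤ 2 * 2 := by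
        calc ∑ y ∈ Nv.erase x, (contrib G I v y).card
            ≤ ∑ _y ∈ Nv.erase x, 2 := sum_le_sum (fun y hy => hclt y (mem_of_mem_erase hy))
          _ = 2 * (Nv.erase x).card := by rw [sum_const, smul_eq_mul, mul_comm]
          _ = 2 * 2 := by rw [card_erase_of_mem hx, hNv3]
      have := hclt x hx
      omega
    refine ⟨by omega, ?_, ?_⟩
    · intro w hwI hvw
      have hwNv : w ∈ Nv := (mem_neighborFinset _ _ _).mpr hvw
      have hcw : contrib G I v w = G.neighborFinset w \ {v} := by rw [contrib, if_pos hwI]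
      have hsubU : contrib G I v w ⊆ U := subset_biUnion_of_mem (contrib G I v) hwNv
      constructor
      · rw [← hcw]; exact hsubU.trans hUS
      · have hc := hc2 w hwNv
        rw [hcw] at hc
        have hvw' : v ∈ G.neighborFinset w := (mem_neighborFinset _ _ _).mpr hvw.symm
        have : ({v} : Finset V) ⊆ G.neighborFinset w := by simpa using hvw'
        rw [card_sdiff_of_subset this, card_singleton] at hc
        have : G.degree w = (G.neighborFinset w).card := rfl
        have := hdeg3 w
        omega
    · intro a hva haI
      have haNv : a ∈ Nv := (mem_neighborFinset _ _ _).mpr hva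
      have hca : a ∈ contrib G I v a := by
        rw [contrib, if_neg haI]; exact mem_insert_self _ _
      exact hUS (subset_biUnion_of_mem (contrib G I v) haNv hca)
  obtain ⟨v0, hv0⟩ := hne
  set R : V → Prop := fun z => z ∈ S ∨ (z ∈ I ∧ ∀ y, G.Adj z y → y ∈ S) with hR
  have hcl : ∀ a b, R a → G.Adj a b → R b := by
    intro a b hRa hab
    rcases hRa with haS | ⟨haI, haN⟩
    · by_cases hbI : b ∈ I
      · right
        refine ⟨hbI, ?_⟩
        intro y hby
        by_cases hya : y = a
        · subst hya; exact haS
        · have hsub := ((key a haS).2.1 b hbI hab).1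
          apply hsub
          rw [mem_sdiff, mem_neighborFinset, mem_singleton]
          exact ⟨hby, hya⟩
      · left; exact (key a haS).2.2 b hab hbI
    · left; exact haN b hab
  have hRall : ∀ x, G.Reachable v0 x → R x :=
    fun x h => walk_closure G hcl h (Or.inl hv0)
  set c := G.connectedComponentMk v0 with hcdef
  have h3 : ∀ x, G.connectedComponentMk x = c → G.degree x = 3 := by
    intro x hx
    have hreach : G.Reachable v0 x := ((ConnectedComponent.eq).mp hx).symm
    rcases hRall x hreach with hxS | ⟨hxI, hxN⟩
    · exact (key x hxS).1
    · have hxv0 : x ≠ v0 := by intro h; rw [h] at hxI; exact (hSF v0 hv0) hxI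
      obtain ⟨y, hxy⟩ := nbr_of_reachable_ne G hreach hxv0
      have hyS : y ∈ S := hxN y hxy
      exact ((key y hyS).2.1 x hxI hxy.symm).2
  obtain ⟨d, hdc, hdI, hd5⟩ := hdefect c h3
  have hdreach : G.Reachable v0 d := ((ConnectedComponent.eq).mp hdc).symm
  have hdS : d ∈ S := by
    rcases hRall d hdreach with h | ⟨h, -⟩
    · exact h
    · exact absurd h hdI
  have h6 := hcon d hdS
  have hfsub : S.filter (fun y => Hadj G I d y) ⊆ univ.filter (fun y => Hadj G I d y) :=
    filter_subset_filter _ (subset_univ S)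
  have := card_le_card hfsub
  omega

lemma bound5 {I : Finset V} {d n1 n2 n3 : V}
    (hN : G.neighborFinset d = {n1, n2, n3}) (B : Finset V)
    (h1 : contrib G I d n1 ⊆ B) (h2 : contrib G I d n2 ⊆ B) (h3 : contrib G I d n3 ⊆ B)
    (hB : B.card ≤ 5) :
    (univ.filter (fun y => Hadj G I d y)).card ≤ 5 := by
  have hsub : univ.filter (fun y => Hadj G I d y) ⊆ B := by
    intro y hy
    have := hnbr_subset G I d hy
    rw [mem_biUnion] at this
    obtain ⟨x, hx, hyx⟩ := this
    rw [hN] at hx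
    simp only [mem_insert, mem_singleton] at hx
    rcases hx with rfl | rfl | rfl
    · exact h1 hyx
    · exact h2 hyx
    · exact h3 hyx
  exact le_trans (card_le_card hsub) hB

lemma mk_adj {x y : V} (h : G.Adj x y) :
    G.connectedComponentMk x = G.connectedComponentMk y :=
  ConnectedComponent.sound h.reachable

lemma seed (hdeg3 : ∀ v, G.degree v ≤ 3) (c : G.ConnectedComponent)
    (h3 : ∀ x, G.connectedComponentMk x = c → G.degree x = 3) :
    ∃ (A X : Finset V) (d : V),
      (∀ a ∈ A, G.connectedComponentMk a = c) ∧
      (∀ x ∈ X, G.connectedComponentMk x = c) ∧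
      (∀ a ∈ A, ∀ b ∈ A, ¬G.Adj a b) ∧
      (∀ a ∈ A, a ∉ X) ∧
      (∀ x ∈ X, ∃ a ∈ A, G.Adj x a) ∧
      G.connectedComponentMk d = c ∧
      ∀ I : Finset V, A ⊆ I → (∀ x ∈ X, x ∉ I) →
        (∀ a ∈ I, ∀ b ∈ I, ¬G.Adj a b) →
        (∀ v, v ∉ I → ∃ w ∈ I, G.Adj v w) →
        d ∉ I ∧ (univ.filter (fun y => Hadj G I d y)).card ≤ 5 := by
  by_cases htri : ∃ x y z, G.connectedComponentMk x = c ∧ G.Adj x y ∧ G.Adj y z ∧ G.Adj z x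
  · -- CASE (a): a triangle in the component
    obtain ⟨x, y, z, hcx, hxy, hyz, hzx⟩ := htri
    refine ⟨{x}, ∅, y, ?_, ?_, ?_, ?_, ?_, ?_, ?_⟩
    · intro a ha; rw [mem_singleton] at ha; subst ha; exact hcx
    · intro a ha; exact absurd ha (notMem_empty a)
    · intro a ha b hb
      rw [mem_singleton] at ha hb; subst ha; subst hb; exact G.irrefl
    · intro a _; exact notMem_empty a
    · intro a ha; exact absurd ha (notMem_empty a)
    · exact (mk_adj G hxy).symm.trans hcx
    · intro I hAI hXI hind hmax
      have hxI : x ∈ I := hAI (mem_singleton_self x)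
      have hyI : y ∉ I := fun hy => hind x hxI y hy hxy
      have hzI : z ∉ I := fun hz => hind x hxI z hz hzx.symm
      refine ⟨hyI, ?_⟩
      have hdy : (G.neighborFinset y).card = 3 := h3 y ((mk_adj G hxy).symm.trans hcx)
      have hxN : x ∈ G.neighborFinset y := (mem_neighborFinset _ _ _).mpr hxy.symm
      have hzN : z ∈ G.neighborFinset y := (mem_neighborFinset _ _ _).mpr hyz
      have hxz : x ≠ z := fun h => (G.irrefl (h ▸ hzx))
      obtain ⟨t, htx, htz, hNy⟩ := card3_extract hdy hxN hzN hxz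
      -- t is a neighbor of y
      have htN : t ∈ G.neighborFinset y := by rw [hNy]; simp
      have hyt : G.Adj y t := (mem_neighborFinset _ _ _).mp htN
      set B : Finset V :=
        (contrib G I y x ∪ (G.neighborFinset z \ {y, x})) ∪ contrib G I y t with hB
      have hzB : z ∈ contrib G I y x := by
        rw [contrib, if_pos hxI, mem_sdiff, mem_neighborFinset, mem_singleton]
        exact ⟨hzx.symm, fun h => G.irrefl (h ▸ hyz)⟩
      have hsub2 : contrib G I y z ⊆ B := by
        intro w hw
        rw [contrib, if_neg hzI, mem_insert] at hw
        rcases hw with rfl | hw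
        · exact mem_union_left _ (mem_union_left _ hzB)
        · rw [mem_sdiff, mem_filter, mem_singleton] at hw
          refine mem_union_left _ (mem_union_right _ ?_)
          rw [mem_sdiff, mem_insert, mem_singleton]
          refine ⟨hw.1.1, ?_⟩
          rintro (rfl | rfl)
          · exact hw.2 rfl
          · exact hw.1.2 hxI
      have hcard : B.card ≤ 5 := by
        have hc1 : (contrib G I y x).card ≤ 2 :=
          contrib_card_le G hxy.symm hyI hdeg3 hmax
        have hc3 : (contrib G I y t).card ≤ 2 :=
          contrib_card_le G hyt hyI hdeg3 hmax
        have hc2 : (G.neighborFinset z \ {y, x}).card ≤ 1 := by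
          have hsub' : ({y, x} : Finset V) ⊆ G.neighborFinset z := by
            intro w hw
            rw [mem_insert, mem_singleton] at hw
            rcases hw with rfl | rfl
            · exact (mem_neighborFinset _ _ _).mpr hyz.symm
            · exact (mem_neighborFinset _ _ _).mpr hzx
          have hyx : y ≠ x := fun h => G.irrefl (h ▸ hxy)
          have hcyx : ({y, x} : Finset V).card = 2 := by
            rw [card_insert_of_notMem (by simpa using hyx), card_singleton]
          have hdz : (G.neighborFinset z).card ≤ 3 := hdeg3 z
          rw [card_sdiff_of_subset hsub', hcyx]
          omega
        calc B.card ≤ (contrib G I y x ∪ (G.neighborFinset z \ {y, x})).card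
            + (contrib G I y t).card := card_union_le _ _
          _ ≤ (contrib G I y x).card + (G.neighborFinset z \ {y, x}).card
            + (contrib G I y t).card := by
              have := card_union_le (contrib G I y x) (G.neighborFinset z \ {y, x})
              omega
          _ ≤ 5 := by omega
      exact bound5 G hNy B (subset_union_left.trans subset_union_left) hsub2
        subset_union_right hcard
  · by_cases hquad : ∃ u a z b, G.connectedComponentMk u = c ∧
        G.Adj u a ∧ G.Adj a z ∧ G.Adj z b ∧ G.Adj b u ∧ a ≠ b ∧ u ≠ z
    · -- CASE (b): no triangle but a 4-cycle
      obtain ⟨u, a, z, b, hcu, hua, haz, hzb, hbu, hab, huz⟩ := hquad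
      refine ⟨{u}, ∅, a, ?_, ?_, ?_, ?_, ?_, ?_, ?_⟩
      · intro w hw; rw [mem_singleton] at hw; subst hw; exact hcu
      · intro w hw; exact absurd hw (notMem_empty w)
      · intro w hw w' hw'
        rw [mem_singleton] at hw hw'; subst hw; subst hw'; exact G.irrefl
      · intro w _; exact notMem_empty w
      · intro w hw; exact absurd hw (notMem_empty w)
      · exact (mk_adj G hua).symm.trans hcu
      · intro I hAI hXI hind hmax
        have huI : u ∈ I := hAI (mem_singleton_self u)
        have haI : a ∉ I := fun h => hind u huI a h hua
        have hbI : b ∉ I := fun h => hind u huI b h hbu.symm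
        refine ⟨haI, ?_⟩
        have hda : (G.neighborFinset a).card = 3 := h3 a ((mk_adj G hua).symm.trans hcu)
        have huN : u ∈ G.neighborFinset a := (mem_neighborFinset _ _ _).mpr hua.symm
        have hzN : z ∈ G.neighborFinset a := (mem_neighborFinset _ _ _).mpr haz
        obtain ⟨s, hsu, hsz, hNa⟩ := card3_extract hda huN hzN huz
        have hsN : s ∈ G.neighborFinset a := by rw [hNa]; simp
        have has : G.Adj a s := (mem_neighborFinset _ _ _).mp hsN
        have hbC1 : b ∈ contrib G I a u := by
          rw [contrib, if_pos huI, mem_sdiff, mem_neighborFinset, mem_singleton]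
          exact ⟨hbu.symm, fun h => hab h.symm⟩
        have hc1 : (contrib G I a u).card ≤ 2 := contrib_card_le G hua.symm haI hdeg3 hmax
        have hc3 : (contrib G I a s).card ≤ 2 := contrib_card_le G has haI hdeg3 hmax
        by_cases hzI : z ∈ I
        · -- middle contribution through z ∈ I
          set B : Finset V :=
            (contrib G I a u ∪ (G.neighborFinset z \ {a, b})) ∪ contrib G I a s with hB
          have hsub2 : contrib G I a z ⊆ B := by
            intro w hw
            rw [contrib, if_pos hzI, mem_sdiff, mem_singleton] at hw
            by_cases hwb : w = b
            · subst hwb; exact mem_union_left _ (mem_union_left _ hbC1)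
            · refine mem_union_left _ (mem_union_right _ ?_)
              rw [mem_sdiff, mem_insert, mem_singleton]
              exact ⟨hw.1, fun h => h.elim hw.2 hwb⟩
          have hc2 : (G.neighborFinset z \ {a, b}).card ≤ 1 := by
            have hsub' : ({a, b} : Finset V) ⊆ G.neighborFinset z := by
              intro w hw
              rw [mem_insert, mem_singleton] at hw
              rcases hw with rfl | rfl
              · exact (mem_neighborFinset _ _ _).mpr haz.symm
              · exact (mem_neighborFinset _ _ _).mpr hzb
            have hcab : ({a, b} : Finset V).card = 2 := by
              rw [card_insert_of_notMem (by simpa using hab), card_singleton]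
            have hdz : (G.neighborFinset z).card ≤ 3 := hdeg3 z
            rw [card_sdiff_of_subset hsub', hcab]
            omega
          have hcard : B.card ≤ 5 := by
            calc B.card ≤ (contrib G I a u ∪ (G.neighborFinset z \ {a, b})).card
                + (contrib G I a s).card := card_union_le _ _
              _ ≤ 5 := by
                  have := card_union_le (contrib G I a u) (G.neighborFinset z \ {a, b})
                  omega
          exact bound5 G hNa B (subset_union_left.trans subset_union_left) hsub2
            subset_union_right hcard
        · -- middle contribution through z ∉ I
          set B : Finset V := (contrib G I a u ∪ {z}) ∪ contrib G I a s with hB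
          obtain ⟨z', hz'I, hzz'⟩ := hmax z hzI
          have hsub2 : contrib G I a z ⊆ B := by
            intro w hw
            rw [contrib, if_neg hzI, mem_insert] at hw
            rcases hw with rfl | hw
            · exact mem_union_left _ (mem_union_right _ (mem_singleton_self _))
            · rw [mem_sdiff, mem_filter, mem_singleton] at hw
              -- w is a non-I neighbor of z distinct from a; show w = b
              have hNz : G.neighborFinset z = {a, b, z'} := by
                have hsub' : ({a, b, z'} : Finset V) ⊆ G.neighborFinset z := by
                  intro y hy
                  simp only [mem_insert, mem_singleton] at hy
                  rcases hy with rfl | rfl | rfl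
                  · exact (mem_neighborFinset _ _ _).mpr haz.symm
                  · exact (mem_neighborFinset _ _ _).mpr hzb
                  · exact (mem_neighborFinset _ _ _).mpr hzz'
                have hz'a : z' ≠ a := fun h => haI (h ▸ hz'I)
                have hz'b : z' ≠ b := fun h => hbI (h ▸ hz'I)
                have hcard3 : ({a, b, z'} : Finset V).card = 3 := by
                  rw [card_insert_of_notMem, card_insert_of_notMem, card_singleton]
                  · simpa using fun h => hz'b h.symm
                  · simp only [mem_insert, mem_singleton]
                    exact fun h => h.elim hab (fun h' => hz'a h'.symm)
                have hdz : (G.neighborFinset z).card ≤ 3 := hdeg3 z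
                exact (eq_of_subset_of_card_le hsub' (by omega)).symm
              have hwN := hw.1.1
              rw [hNz] at hwN
              simp only [mem_insert, mem_singleton] at hwN
              rcases hwN with rfl | rfl | rfl
              · exact absurd rfl hw.2
              · exact mem_union_left _ (mem_union_left _ hbC1)
              · exact absurd hz'I hw.1.2
          have hcard : B.card ≤ 5 := by
            calc B.card ≤ (contrib G I a u ∪ {z}).card + (contrib G I a s).card :=
                card_union_le _ _
              _ ≤ 5 := by
                  have := card_union_le (contrib G I a u) ({z} : Finset V)
                  have : ({z} : Finset V).card = 1 := card_singleton _
                  omega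
          exact bound5 G hNa B (subset_union_left.trans subset_union_left) hsub2
            subset_union_right hcard
    · -- CASE (c): no triangle, no 4-cycle
      obtain ⟨u, hcu⟩ := c.exists_rep
      have hdu : (G.neighborFinset u).card = 3 := h3 u hcu
      have hune : (G.neighborFinset u).Nonempty := by rw [← card_pos, hdu]; omega
      obtain ⟨v, hvN⟩ := hune
      have huv : G.Adj u v := (mem_neighborFinset _ _ _).mp hvN
      obtain ⟨p, q, hpv, hqv, hpq, hNu⟩ := card3_extract' hdu hvN
      have hpN : p ∈ G.neighborFinset u := by rw [hNu]; simp
      have hqN : q ∈ G.neighborFinset u := by rw [hNu]; simp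
      have hup : G.Adj u p := (mem_neighborFinset _ _ _).mp hpN
      have huq : G.Adj u q := (mem_neighborFinset _ _ _).mp hqN
      have hcv : G.connectedComponentMk v = c := (mk_adj G huv).symm.trans hcu
      have hdv : (G.neighborFinset v).card = 3 := h3 v hcv
      have huN' : u ∈ G.neighborFinset v := (mem_neighborFinset _ _ _).mpr huv.symm
      obtain ⟨v1, v2, hv1u, hv2u, hv12, hNv⟩ := card3_extract' hdv huN'
      have hv1N : v1 ∈ G.neighborFinset v := by rw [hNv]; simp
      have hv2N : v2 ∈ G.neighborFinset v := by rw [hNv]; simp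
      have hvv1 : G.Adj v v1 := (mem_neighborFinset _ _ _).mp hv1N
      have hvv2 : G.Adj v v2 := (mem_neighborFinset _ _ _).mp hv2N
      -- non-adjacency facts
      have hnpq : ¬G.Adj p q := fun h => htri ⟨u, p, q, hcu, hup, h, huq.symm⟩
      have hv1p : v1 ≠ p := by
        rintro rfl
        exact htri ⟨u, v, v1, hcu, huv, hvv1, hup.symm⟩
      have hv1q : v1 ≠ q := by
        rintro rfl
        exact htri ⟨u, v, v1, hcu, huv, hvv1, huq.symm⟩
      have hnv1p : ¬G.Adj v1 p := by
        intro h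
        exact hquad ⟨u, p, v1, v, hcu, hup, h.symm, hvv1.symm, huv.symm,
          fun h' => hpv h', fun h' => hv1u h'.symm⟩
      have hnv1q : ¬G.Adj v1 q := by
        intro h
        exact hquad ⟨u, q, v1, v, hcu, huq, h.symm, hvv1.symm, huv.symm,
          fun h' => hqv h', fun h' => hv1u h'.symm⟩
      refine ⟨{p, q, v1}, {u, v}, v, ?_, ?_, ?_, ?_, ?_, hcv, ?_⟩
      · intro w hw
        simp only [mem_insert, mem_singleton] at hw
        rcases hw with rfl | rfl | rfl
        · exact (mk_adj G hup).symm.trans hcu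
        · exact (mk_adj G huq).symm.trans hcu
        · exact (mk_adj G hvv1).symm.trans hcv
      · intro w hw
        simp only [mem_insert, mem_singleton] at hw
        rcases hw with rfl | rfl
        · exact hcu
        · exact hcv
      · intro w hw w' hw'
        simp only [mem_insert, mem_singleton] at hw hw'
        rcases hw with rfl | rfl | rfl <;> rcases hw' with rfl | rfl | rfl
        · exact G.irrefl
        · exact hnpq
        · exact fun h => hnv1p h.symm
        · exact fun h => hnpq h.symm
        · exact G.irrefl
        · exact fun h => hnv1q h.symm
        · exact hnv1p
        · exact hnv1q
        · exact G.irrefl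
      · intro w hw
        simp only [mem_insert, mem_singleton] at hw ⊢
        rcases hw with rfl | rfl | rfl
        · push_neg
          exact ⟨fun h => G.irrefl (h ▸ hup), fun h => hpv h⟩
        · push_neg
          exact ⟨fun h => G.irrefl (h ▸ huq), fun h => hqv h⟩
        · push_neg
          exact ⟨fun h => hv1u h, fun h => G.irrefl (h ▸ hvv1)⟩
      · intro w hw
        simp only [mem_insert, mem_singleton] at hw
        rcases hw with rfl | rfl
        · exact ⟨p, by simp, hup⟩
        · exact ⟨v1, by simp, hvv1⟩
      · intro I hAI hXI hind hmax
        have hpI : p ∈ I := hAI (by simp)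
        have hqI : q ∈ I := hAI (by simp)
        have hv1I : v1 ∈ I := hAI (by simp)
        have huI : u ∉ I := hXI u (by simp)
        have hvI : v ∉ I := hXI v (by simp)
        refine ⟨hvI, ?_⟩
        have hcu1 : contrib G I v u ⊆ {u} := by
          intro w hw
          rw [contrib, if_neg huI, mem_insert] at hw
          rcases hw with rfl | hw
          · exact mem_singleton_self _
          · exfalso
            rw [mem_sdiff, mem_filter, mem_singleton] at hw
            have hwN := hw.1.1
            rw [hNu] at hwN
            simp only [mem_insert, mem_singleton] at hwN
            rcases hwN with rfl | rfl | rfl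
            · exact hw.2 rfl
            · exact hw.1.2 hpI
            · exact hw.1.2 hqI
        set B : Finset V := ({u} ∪ contrib G I v v1) ∪ contrib G I v v2 with hB
        have hcard : B.card ≤ 5 := by
          have hc2 : (contrib G I v v1).card ≤ 2 := contrib_card_le G hvv1 hvI hdeg3 hmax
          have hc3 : (contrib G I v v2).card ≤ 2 := contrib_card_le G hvv2 hvI hdeg3 hmax
          calc B.card ≤ ({u} ∪ contrib G I v v1).card + (contrib G I v v2).card :=
              card_union_le _ _
            _ ≤ 5 := by
                have h4 := card_union_le ({u} : Finset V) (contrib G I v v1)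
                have h5 : ({u} : Finset V).card = 1 := card_singleton _
                omega
        exact bound5 G hNv B
          (hcu1.trans ((subset_union_left (s₂ := contrib G I v v1)).trans subset_union_left))
          ((subset_union_right (s₁ := ({u} : Finset V))).trans subset_union_left)
          subset_union_right hcard

lemma exists_good_I (hdeg3 : ∀ v, G.degree v ≤ 3) :
    ∃ I : Finset V,
      (∀ a ∈ I, ∀ b ∈ I, ¬G.Adj a b) ∧
      (∀ v, v ∉ I → ∃ w ∈ I, G.Adj v w) ∧
      (∀ c : G.ConnectedComponent, (∀ x, G.connectedComponentMk x = c → G.degree x = 3) →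
        ∃ d, G.connectedComponentMk d = c ∧ d ∉ I ∧
          (univ.filter (fun y => Hadj G I d y)).card ≤ 5) := by
  have hseed := seed G hdeg3
  choose A X d hA hX hAind hAX hXdom hd hI using hseed
  set P : G.ConnectedComponent → Prop :=
    fun c => ∀ x, G.connectedComponentMk x = c → G.degree x = 3 with hP
  set Aset : Finset V := univ.filter (fun a => ∃ c, ∃ h : P c, a ∈ A c h) with hAset
  set Xset : Finset V := univ.filter (fun x => ∃ c, ∃ h : P c, x ∈ X c h) with hXset
  have hAmem : ∀ c (h : P c), ∀ a ∈ A c h, a ∈ Aset := by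
    intro c h a ha
    rw [hAset, mem_filter]
    exact ⟨mem_univ _, c, h, ha⟩
  have hXmem : ∀ c (h : P c), ∀ x ∈ X c h, x ∈ Xset := by
    intro c h x hx
    rw [hXset, mem_filter]
    exact ⟨mem_univ _, c, h, hx⟩
  have hAXdisj : ∀ a ∈ Aset, a ∉ Xset := by
    intro a ha hx
    rw [hAset, mem_filter] at ha
    rw [hXset, mem_filter] at hx
    obtain ⟨-, c1, h1, ha1⟩ := ha
    obtain ⟨-, c2, h2, hx2⟩ := hx
    have hc : c1 = c2 := (hA c1 h1 a ha1).symm.trans (hX c2 h2 a hx2)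
    subst hc
    exact hAX c1 h1 a ha1 hx2
  have hAsub : Aset ⊆ univ \ Xset := by
    intro a ha
    rw [mem_sdiff]
    exact ⟨mem_univ _, hAXdisj a ha⟩
  have hAindset : ∀ a ∈ Aset, ∀ b ∈ Aset, ¬G.Adj a b := by
    intro a ha b hb hadj
    rw [hAset, mem_filter] at ha hb
    obtain ⟨-, c1, h1, ha1⟩ := ha
    obtain ⟨-, c2, h2, hb2⟩ := hb
    have hc : c1 = c2 := (hA c1 h1 a ha1).symm.trans ((mk_adj G hadj).trans (hA c2 h2 b hb2))
    subst hc
    exact hAind c1 h1 a ha1 b hb2 hadj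
  obtain ⟨I, hAI, hIW, hIind, hIdom⟩ := extend_indep G Aset (univ \ Xset) hAsub hAindset
  have hmaxfull : ∀ v, v ∉ I → ∃ w ∈ I, G.Adj v w := by
    intro w hw
    by_cases hwX : w ∈ Xset
    · rw [hXset, mem_filter] at hwX
      obtain ⟨-, c1, h1, hx1⟩ := hwX
      obtain ⟨a, ha, hadj⟩ := hXdom c1 h1 w hx1
      exact ⟨a, hAI (hAmem c1 h1 a ha), hadj⟩
    · exact hIdom w (mem_sdiff.mpr ⟨mem_univ _, hwX⟩) hw
  refine ⟨I, hIind, hmaxfull, ?_⟩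
  intro c hc
  refine ⟨d c hc, hd c hc, ?_⟩
  apply hI c hc I
  · intro a ha
    exact hAI (hAmem c hc a ha)
  · intro x hx hxI
    have hxX : x ∈ Xset := hXmem c hc x hx
    have := hIW hxI
    rw [mem_sdiff] at this
    exact this.2 hxX
  · exact hIind
  · exact hmaxfull

end PackingSub

theorem stmt_4 {V : Type*} [Fintype V] (G : SimpleGraph V) [DecidableRel G.Adj]
    (hsub : ∀ v, G.degree v ≤ 3) :
    SPacking G 7 ![1, 2, 2, 2, 2, 2, 2] := by
  classical
  obtain ⟨I, hind, hmax, hdefect⟩ := PackingSub.exists_good_I G hsub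
  have hdeg := PackingSub.main_degen G I hsub hind hmax hdefect
  obtain ⟨g, hg⟩ := PackingSub.sixcolor G I hdeg (Finset.univ.filter (fun v => v ∉ I))
    (fun v hv => (Finset.mem_filter.mp hv).2)
  refine ⟨fun v => if v ∈ I then 0 else (g v).succ, ?_⟩
  intro u v hne hc hreach
  by_cases hu : u ∈ I <;> by_cases hv : v ∈ I
  · simp only [if_pos hu, if_pos hv] at hc ⊢
    have h1 : (![1, 2, 2, 2, 2, 2, 2] : Fin 7 → ℕ) 0 = 1 := rfl
    rw [h1]
    exact PackingSub.dist_gt_one G hne hreach (hind u hu v hv)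
  · simp only [if_pos hu, if_neg hv] at hc
    exact absurd hc.symm (Fin.succ_ne_zero _)
  · simp only [if_neg hu, if_pos hv] at hc
    exact absurd hc (Fin.succ_ne_zero _)
  · simp only [if_neg hu, if_neg hv] at hc ⊢
    have hgg : g u = g v := Fin.succ_injective _ hc
    have hmem : ∀ w, w ∉ I → w ∈ Finset.univ.filter (fun v => v ∉ I) := by
      intro w hw; simp [hw]
    have hnH : ¬ PackingSub.Hadj G I u v := fun h => hg u (hmem u hu) v (hmem v hv) h hgg
    have hnadj : ¬ G.Adj u v := fun h => hnH ⟨hu, hv, hne, Or.inl h⟩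
    have hncom : ∀ w, ¬(G.Adj u w ∧ G.Adj w v) := fun w h => hnH ⟨hu, hv, hne, Or.inr ⟨w, h⟩⟩
    have h2 : 2 < G.dist u v := PackingSub.dist_gt_two G hne hreach hnadj hncom
    have hval : (![1, 2, 2, 2, 2, 2, 2] : Fin 7 → ℕ) (g u).succ = 2 := by
      have h6 : ∀ i : Fin 6, (![1, 2, 2, 2, 2, 2, 2] : Fin 7 → ℕ) i.succ = 2 := by decide
      exact h6 (g u)
    rw [hval]
    exact h2
end

section
/- The Petersen graph does not admit a (1,2,2,2,2,2)-packing coloring, i.e. its vertex set cannot be partitioned into one independent set and five 2-packings. -/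
/-- The Petersen graph as the Kneser graph K(5,2). -/
def Petersen : SimpleGraph {s : Finset (Fin 5) // s.card = 2} where
  Adj a b := Disjoint (a : Finset (Fin 5)) (b : Finset (Fin 5))
  symm := ⟨fun a b h => h.symm⟩
  loopless := ⟨fun a h => by
    have h1 := disjoint_self.mp h
    have h2 := a.2
    simp [h1] at h2⟩

open Finset SimpleGraph

def IsPackingColoring {V : Type*} (G : SimpleGraph V) {k : ℕ} (s : Fin k → ℕ)
    (c : V → Fin k) : Prop :=
  ∀ u v : V, u ≠ v → c u = c v → G.Reachable u v → s (c u) < G.dist u v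

namespace IsPackingColoring

variable {V : Type*} {G : SimpleGraph V} {k : ℕ} {s : Fin k → ℕ} {c : V → Fin k}

theorem isIndepSet_fiber (hc : IsPackingColoring G s c) {i : Fin k} (hi : 1 ≤ s i) :
    G.IsIndepSet {v | c v = i} := by
  intro u (hu : c u = i) v (hv : c v = i) hne hadj
  have hlt := hc u v hne (hu.trans hv.symm) hadj.reachable
  rw [dist_eq_one_iff_adj.2 hadj, hu] at hlt
  omega

theorem subsingleton_fiber (hc : IsPackingColoring G s c) {i : Fin k} (hdiam : G.ediam ≤ s i) :
    {v | c v = i}.Subsingleton := by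
  intro u (hu : c u = i) v (hv : c v = i)
  by_contra hne
  have hedist : G.edist u v ≤ s i := ediam_le_iff.1 hdiam u v
  have hreach : G.Reachable u v :=
    edist_ne_top_iff_reachable.1 (ne_top_of_le_ne_top (ENat.natCast_ne_top _) hedist)
  have hlt := hc u v hne (hu.trans hv.symm) hreach
  rw [hu] at hlt
  rw [← hreach.coe_dist_eq_edist, Nat.cast_le] at hedist
  omega

end IsPackingColoring

namespace Petersen

instance : DecidableRel Petersen.Adj := fun a b =>
  inferInstanceAs (Decidable (Disjoint a.1 b.1))

theorem card_vertices : Fintype.card {s : Finset (Fin 5) // s.card = 2} = 10 := by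
  decide

theorem ediam_le_two : Petersen.ediam ≤ 2 := by
  have hnear : ∀ u v, u ≠ v → Petersen.Adj u v ∨ ∃ w, Petersen.Adj u w ∧ Petersen.Adj w v := by
    decide
  refine ediam_le_iff.2 fun u v => ?_
  rcases eq_or_ne u v with rfl | hne
  · simp
  rcases hnear u v hne with hadj | ⟨w, huw, hwv⟩
  · exact (edist_le hadj.toWalk).trans (by simp)
  · exact (edist_le (.cons huw hwv.toWalk)).trans (by simp)

theorem not_pairwise_nonadj_five (a b c d e : {s : Finset (Fin 5) // s.card = 2}) :
    ¬ [a, b, c, d, e].Pairwise (fun u v => u ≠ v ∧ ¬ Petersen.Adj u v) := by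
  -- The prefix hypotheses let the kernel prune the search instead of visiting all 10⁵ tuples.
  have hsearch : ∀ a b, [a, b].Pairwise (fun u v => u ≠ v ∧ ¬ Petersen.Adj u v) →
      ∀ c, [a, b, c].Pairwise (fun u v => u ≠ v ∧ ¬ Petersen.Adj u v) →
      ∀ d, [a, b, c, d].Pairwise (fun u v => u ≠ v ∧ ¬ Petersen.Adj u v) →
      ∀ e, ¬ [a, b, c, d, e].Pairwise (fun u v => u ≠ v ∧ ¬ Petersen.Adj u v) := by
    decide +kernel
  intro h
  exact hsearch a b (h.sublist (by simp)) c (h.sublist (by simp)) d (h.sublist (by simp)) e h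

theorem card_le_four_of_isIndepSet {t : Finset {s : Finset (Fin 5) // s.card = 2}}
    (ht : Petersen.IsIndepSet (t : Set _)) : #t ≤ 4 := by
  by_contra! h5
  obtain ⟨t', ht't, hcard⟩ := exists_subset_card_eq (show 5 ≤ #t by omega)
  have hpair : t'.toList.Pairwise (fun u v => u ≠ v ∧ ¬ Petersen.Adj u v) :=
    t'.nodup_toList.imp_of_mem fun hu hv hne =>
      ⟨hne, ht (ht't (mem_toList.1 hu)) (ht't (mem_toList.1 hv)) hne⟩
  have hlen : t'.toList.length = 5 := by rw [length_toList, hcard]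
  match hl : t'.toList, hlen with
  | [a, b, c, d, e], _ => exact not_pairwise_nonadj_five a b c d e (hl ▸ hpair)

end Petersen

theorem stmt_5 : ¬ SPacking Petersen 6 ![1, 2, 2, 2, 2, 2] := by
  intro h
  obtain ⟨c, hc⟩ : ∃ c, IsPackingColoring Petersen ![1, 2, 2, 2, 2, 2] c := h
  have hzero : #{v | c v = 0} ≤ 4 :=
    Petersen.card_le_four_of_isIndepSet (by simpa using hc.isIndepSet_fiber (i := 0) le_rfl)
  have hsucc (i : Fin 5) : #{v | c v = i.succ} ≤ 1 :=
    card_le_one.2 fun u hu v hv =>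
      hc.subsingleton_fiber (i := i.succ) (Petersen.ediam_le_two.trans (by fin_cases i <;> rfl))
        (by simpa using hu) (by simpa using hv)
  have : 10 ≤ 9 := calc
    10 = #(univ : Finset _) := (card_univ.trans Petersen.card_vertices).symm
    _ = ∑ i, #{v | c v = i} := card_eq_sum_card_fiberwise fun v _ => mem_univ (c v)
    _ = #{v | c v = 0} + ∑ i : Fin 5, #{v | c v = i.succ} := Fin.sum_univ_succ _
    _ ≤ 4 + ∑ _i : Fin 5, 1 := add_le_add hzero (sum_le_sum fun i _ => hsucc i)
    _ = 9 := rfl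
  omega
end

section
/- No cubic graph with more than 3 vertices admits a (1,2,2)-packing coloring. -/
theorem stmt_8 {V : Type*} [Fintype V] (G : SimpleGraph V) [DecidableRel G.Adj]
    (hcubic : ∀ v, G.degree v = 3) (hcard : 3 < Fintype.card V) :
    ¬ SPacking G 3 ![1, 2, 2] := by
  classical
  rintro ⟨f, hf⟩
  have hs1 : ∀ i : Fin 3, 1 ≤ (![1,2,2] : Fin 3 → ℕ) i := by decide
  have hs2 : ∀ i : Fin 3, i ≠ 0 → 2 ≤ (![1,2,2] : Fin 3 → ℕ) i := by decide
  -- adjacent vertices have different colors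
  have hadj : ∀ u v : V, G.Adj u v → f u ≠ f v := by
    intro u v huv h
    have hlt := hf u v huv.ne h ⟨huv.toWalk⟩
    have hd : G.dist u v ≤ 1 := by
      simpa using G.dist_le huv.toWalk
    have := hs1 (f u)
    omega
  -- same nonzero color vertices have no common neighbor
  have hpack : ∀ u v : V, u ≠ v → f u = f v → f u ≠ 0 →
      ∀ w, G.Adj u w → G.Adj w v → False := by
    intro u v huv hfe hf0 w h1 h2
    have hlt := hf u v huv hfe ⟨(h1.toWalk.append h2.toWalk)⟩
    have hd : G.dist u v ≤ 2 := by
      have := G.dist_le (h1.toWalk.append h2.toWalk)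
      simpa using this
    have := hs2 (f u) hf0
    omega
  set n := Fintype.card V with hn
  set A : Finset V := Finset.univ.filter (fun v => f v = 0) with hA
  set B : Finset V := Finset.univ.filter (fun v => f v = 1) with hB
  set C : Finset V := Finset.univ.filter (fun v => f v = 2) with hC
  set D : Finset V := Finset.univ.filter (fun v => ¬ (f v = 0)) with hD
  have hpart : n = A.card + B.card + C.card := by
    have := Finset.card_eq_sum_card_fiberwise
      (f := f) (s := (Finset.univ : Finset V)) (t := (Finset.univ : Finset (Fin 3)))
      (fun x _ => Finset.mem_univ _)
    rw [Fin.sum_univ_three] at this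
    simpa [hn, hA, hB, hC] using this
  have hAD : A.card + D.card = n := by
    simpa [hA, hD, hn] using
      Finset.card_filter_add_card_filter_not
        (s := (Finset.univ : Finset V)) (p := fun v => f v = 0)
  -- closed neighborhoods
  have hNcard : ∀ v : V, (insert v (G.neighborFinset v)).card = 4 := by
    intro v
    rw [Finset.card_insert_of_notMem (by simp)]
    have : (G.neighborFinset v).card = 3 := hcubic v
    omega
  have hdisj : ∀ u v : V, u ≠ v → f u = f v → f u ≠ 0 →
      Disjoint (insert u (G.neighborFinset u)) (insert v (G.neighborFinset v)) := by
    intro u v huv hfe hf0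
    rw [Finset.disjoint_left]
    intro x hxu hxv
    simp only [Finset.mem_insert, SimpleGraph.mem_neighborFinset] at hxu hxv
    rcases hxu with rfl | hxu
    · rcases hxv with rfl | hxv
      · exact huv rfl
      · exact hadj v x hxv hfe.symm
    · rcases hxv with rfl | hxv
      · exact hadj u x hxu hfe
      · exact hpack u v huv hfe hf0 x hxu hxv.symm
  have hball : ∀ (s : Finset V) (i : Fin 3), i ≠ 0 → (∀ x ∈ s, f x = i) →
      4 * s.card ≤ n := by
    intro s i hi hs
    have hdj : ∀ x ∈ s, ∀ y ∈ s, x ≠ y →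
        Disjoint (insert x (G.neighborFinset x)) (insert y (G.neighborFinset y)) := by
      intro x hx y hy hxy
      exact hdisj x y hxy (by rw [hs x hx, hs y hy]) (by rw [hs x hx]; exact hi)
    have hcard' := Finset.card_biUnion hdj
    have hsub : (s.biUnion (fun v => insert v (G.neighborFinset v))).card ≤ n := by
      rw [hn]; exact Finset.card_le_univ _
    rw [hcard'] at hsub
    have : ∑ u ∈ s, (insert u (G.neighborFinset u)).card = 4 * s.card := by
      rw [Finset.sum_congr rfl (fun x _ => hNcard x), Finset.sum_const, smul_eq_mul,
        mul_comm]
    omega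
  have hBle : 4 * B.card ≤ n := hball B 1 (by decide) (fun x hx => by
    simpa [hB] using hx)
  have hCle : 4 * C.card ≤ n := hball C 2 (by decide) (fun x hx => by
    simpa [hC] using hx)
  -- double counting of edges between A and D
  have hdouble : ∑ a ∈ A, (D.filter (fun y => G.Adj a y)).card
      = ∑ y ∈ D, (A.filter (fun a => G.Adj y a)).card := by
    simp_rw [Finset.card_filter]
    rw [Finset.sum_comm]
    refine Finset.sum_congr rfl (fun y _ => Finset.sum_congr rfl (fun a _ => ?_))
    exact if_congr (G.adj_comm a y) rfl rfl
  have hLHS : ∀ a ∈ A, (D.filter (fun y => G.Adj a y)).card = 3 := by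
    intro a ha
    have hfa : f a = 0 := by simpa [hA] using ha
    have : D.filter (fun y => G.Adj a y) = G.neighborFinset a := by
      ext y
      simp only [Finset.mem_filter, hD, Finset.mem_univ, true_and,
        SimpleGraph.mem_neighborFinset]
      constructor
      · exact fun h => h.2
      · intro h
        exact ⟨fun h0 => hadj a y h (by rw [hfa, h0]), h⟩
    rw [this]
    exact hcubic a
  have hRHS : ∀ y : V, (A.filter (fun a => G.Adj y a)).card ≤ 3 := by
    intro y
    have : A.filter (fun a => G.Adj y a) ⊆ G.neighborFinset y := by
      intro a ha
      simp only [Finset.mem_filter] at ha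
      simpa [SimpleGraph.mem_neighborFinset] using ha.2
    calc (A.filter (fun a => G.Adj y a)).card ≤ (G.neighborFinset y).card :=
          Finset.card_le_card this
      _ = 3 := hcubic y
  -- stage 1: non-strict bound, gives 4 * B.card = n
  have h1 : 3 * A.card ≤ 3 * D.card := by
    have l1 : ∑ a ∈ A, (D.filter (fun y => G.Adj a y)).card = 3 * A.card := by
      rw [Finset.sum_congr rfl hLHS, Finset.sum_const, smul_eq_mul, mul_comm]
    have l2 : ∑ y ∈ D, (A.filter (fun a => G.Adj y a)).card ≤ 3 * D.card := by
      calc ∑ y ∈ D, (A.filter (fun a => G.Adj y a)).card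
          ≤ ∑ _y ∈ D, 3 := Finset.sum_le_sum (fun y _ => hRHS y)
        _ = 3 * D.card := by rw [Finset.sum_const, smul_eq_mul, mul_comm]
    omega
  have hBeq : 4 * B.card = n := by omega
  have hCpos : 1 ≤ C.card := by omega
  -- balls of B cover V
  have hcover : B.biUnion (fun v => insert v (G.neighborFinset v)) = Finset.univ := by
    apply Finset.eq_univ_of_card
    rw [Finset.card_biUnion]
    · rw [Finset.sum_congr rfl (fun x _ => hNcard x), Finset.sum_const, smul_eq_mul,
        mul_comm, hBeq, hn]
    · intro x hx y hy hxy
      have hfx : f x = 1 := by simpa [hB] using hx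
      have hfy : f y = 1 := by simpa [hB] using hy
      exact hdisj x y hxy (by rw [hfx, hfy]) (by rw [hfx]; exact one_ne_zero)
  -- find an edge between B and C
  obtain ⟨c, hc⟩ := Finset.card_pos.mp (by omega : 0 < C.card)
  have hfc : f c = 2 := by simpa [hC] using hc
  have hcmem : c ∈ B.biUnion (fun v => insert v (G.neighborFinset v)) := by
    rw [hcover]; exact Finset.mem_univ c
  obtain ⟨b, hbB, hcb⟩ := Finset.mem_biUnion.mp hcmem
  have hfb : f b = 1 := by simpa [hB] using hbB
  have hbc : G.Adj b c := by
    rcases Finset.mem_insert.mp hcb with rfl | h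
    · rw [hfc] at hfb; exact absurd hfb (by decide)
    · exact (SimpleGraph.mem_neighborFinset _ _ _).mp h
  -- stage 2: strict bound
  have hbD : b ∈ D := by
    simp only [hD, Finset.mem_filter, Finset.mem_univ, true_and, hfb]
    decide
  have hbA2 : (A.filter (fun a => G.Adj b a)).card ≤ 2 := by
    have hsub : A.filter (fun a => G.Adj b a) ⊆ (G.neighborFinset b).erase c := by
      intro a ha
      simp only [Finset.mem_filter, hA, Finset.mem_univ, true_and] at ha
      refine Finset.mem_erase.mpr ⟨?_, (SimpleGraph.mem_neighborFinset _ _ _).mpr ha.2⟩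
      intro h; rw [h] at ha
      rw [ha.1] at hfc; exact absurd hfc (by decide)
    calc (A.filter (fun a => G.Adj b a)).card
        ≤ ((G.neighborFinset b).erase c).card := Finset.card_le_card hsub
      _ ≤ (G.neighborFinset b).card - 1 := by
          rw [Finset.card_erase_of_mem ((SimpleGraph.mem_neighborFinset _ _ _).mpr hbc)]
      _ ≤ 2 := by have : (G.neighborFinset b).card = 3 := hcubic b; omega
  have hsum2 : ∑ y ∈ D, (A.filter (fun a => G.Adj y a)).card ≤ 2 + 3 * (D.card - 1) := by
    rw [← Finset.add_sum_erase D _ hbD]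
    have : ∑ y ∈ D.erase b, (A.filter (fun a => G.Adj y a)).card ≤ 3 * (D.card - 1) := by
      calc ∑ y ∈ D.erase b, (A.filter (fun a => G.Adj y a)).card
          ≤ ∑ _y ∈ D.erase b, 3 := Finset.sum_le_sum (fun y _ => hRHS y)
        _ = 3 * (D.card - 1) := by
            rw [Finset.sum_const, smul_eq_mul, mul_comm, Finset.card_erase_of_mem hbD]
    omega
  have hDpos : 1 ≤ D.card := Finset.card_pos.mpr ⟨b, hbD⟩
  have l1 : ∑ a ∈ A, (D.filter (fun y => G.Adj a y)).card = 3 * A.card := by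
    rw [Finset.sum_congr rfl hLHS, Finset.sum_const, smul_eq_mul, mul_comm]
  have hfinal : 3 * A.card ≤ 2 + 3 * (D.card - 1) := by
    rw [← l1, hdouble]; exact hsum2
  omega
end

section
/- If G is a bipartite graph, then its subdivision S(G) admits a (1,3,3)-packing coloring. -/
section aux
variable {V : Type*} {G : SimpleGraph V}

lemma subdiv_adj_iff {a b : V ⊕ G.edgeSet} : (Subdiv G).Adj a b ↔ a ≠ b ∧
    ((∃ (v : V) (e : G.edgeSet), a = Sum.inl v ∧ b = Sum.inr e ∧ v ∈ (e : Sym2 V)) ∨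
     (∃ (v : V) (e : G.edgeSet), b = Sum.inl v ∧ a = Sum.inr e ∧ v ∈ (e : Sym2 V))) := by
  simp [Subdiv, SimpleGraph.fromRel_adj]

def par : V ⊕ G.edgeSet → ZMod 2 := Sum.elim (fun _ => 0) (fun _ => 1)

lemma par_adj {a b : V ⊕ G.edgeSet} (hab : (Subdiv G).Adj a b) :
    (par a : ZMod 2) = par b + 1 := by
  rw [subdiv_adj_iff] at hab
  rcases hab.2 with ⟨v, e, rfl, rfl, _⟩ | ⟨v, e, rfl, rfl, _⟩ <;> simp [par] <;> decide

lemma walk_parity : ∀ {a b : V ⊕ G.edgeSet} (w : (Subdiv G).Walk a b),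
    (w.length : ZMod 2) = par a + par b := by
  intro a b w
  induction w with
  | nil => rename_i x; cases x <;> simp [par] <;> decide
  | cons hadj w ih =>
    simp [ih, par_adj hadj]; ring
end aux

theorem stmt_13 {V : Type*} (G : SimpleGraph V) (h : G.Colorable 2) :
    SPacking (Subdiv G) 3 ![1, 3, 3] := by
  obtain ⟨C⟩ := h
  refine ⟨Sum.elim (fun v => if C v = 0 then 1 else 2) (fun _ => 0), ?_⟩
  intro u v huv hc hr
  have hd0 : (Subdiv G).dist u v ≠ 0 := by
    simp [SimpleGraph.dist_eq_zero_iff_eq_or_not_reachable, huv, hr]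
  match u, v with
  | Sum.inr e, Sum.inr f =>
    -- color 0, need dist > 1
    simp only [Sum.elim_inr]
    have hd1 : (Subdiv G).dist (Sum.inr e) (Sum.inr f) ≠ 1 := by
      intro h1
      have := (SimpleGraph.dist_eq_one_iff_adj).mp h1
      rw [subdiv_adj_iff] at this
      rcases this.2 with ⟨v, e', he, _⟩ | ⟨v, e', he, _⟩ <;> simp at he
    show (1 : ℕ) < _
    omega
  | Sum.inl a, Sum.inr e => simp at hc; split at hc <;> simp at hc
  | Sum.inr e, Sum.inl a => simp at hc; split at hc <;> simp at hc
  | Sum.inl a, Sum.inl b =>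
    -- same side of bipartition: C a = C b
    have hCab : C a = C b := by
      have key : ∀ x y : Fin 2, x ≠ 0 → y ≠ 0 → x = y := by decide
      simp only [Sum.elim_inl] at hc
      split_ifs at hc with h1 h2 h2
      · exact h1.trans h2.symm
      · simp at hc
      · simp at hc
      · exact key _ _ h1 h2
    have hnadj : ¬ G.Adj a b := fun hadj => C.valid hadj hCab
    obtain ⟨w, hw⟩ := hr.exists_walk_length_eq_dist
    have hpar : ((Subdiv G).dist (Sum.inl a) (Sum.inl b) : ZMod 2) = 0 := by
      rw [← hw, walk_parity w]; simp [par]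
    have hd2 : (Subdiv G).dist (Sum.inl a) (Sum.inl b) ≠ 2 := by
      intro h2
      rw [h2] at hw
      cases w with
      | nil => simp at hw
      | cons hadj w' =>
        rename_i x
        have hlen : w'.length = 1 := by simpa using hw
        have hadj2 : (Subdiv G).Adj x (Sum.inl b) := w'.adj_of_length_eq_one hlen
        rw [subdiv_adj_iff] at hadj hadj2
        rcases hadj.2 with ⟨v1, e1, hv1, hx1, hm1⟩ | ⟨v1, e1, hv1, hx1, hm1⟩ <;>
        rcases hadj2.2 with ⟨v2, e2, hv2, hx2, hm2⟩ | ⟨v2, e2, hv2, hx2, hm2⟩ <;>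
          simp_all
        · have he : (e1 : Sym2 V) = s(v1, v2) := (Sym2.mem_and_mem_iff huv).mp ⟨hm1, hadj2⟩
          have h2e := e1.2
          rw [he, SimpleGraph.mem_edgeSet] at h2e
          exact hnadj h2e
    have hdvd : 2 ∣ (Subdiv G).dist (Sum.inl a) (Sum.inl b) :=
      (ZMod.natCast_eq_zero_iff _ 2).mp hpar
    simp only [Sum.elim_inl]
    have hgoal : 3 < (Subdiv G).dist (Sum.inl a) (Sum.inl b) := by omega
    split_ifs <;> simpa using hgoal
end

section
/- There exists a cubic graph of order 12 that does not admit a (1,1,3,3,3)-packing coloring; in particular, any cubic graph of diameter at most 3 containing four vertex-disjoint triangles is not (1,1,3,3,3)-packing colorable. -/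
namespace SimpleGraph

variable {V : Type*} {G : SimpleGraph V}

def IsSPackingColoring {k : ℕ} (G : SimpleGraph V) (s : Fin k → ℕ) (c : V → Fin k) : Prop :=
  ∀ u v : V, u ≠ v → c u = c v → G.Reachable u v → s (c u) < G.dist u v

namespace IsSPackingColoring

variable {k : ℕ} {s : Fin k → ℕ} {c : V → Fin k}

lemma apply_ne_of_adj (hc : G.IsSPackingColoring s c) {u v : V} (huv : G.Adj u v)
    (hs : 1 ≤ s (c u)) : c u ≠ c v := by
  intro hcuv
  have := hc u v huv.ne hcuv huv.reachable
  rw [dist_eq_one_iff_adj.mpr huv] at this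
  omega

lemma eq_of_apply_eq (hc : G.IsSPackingColoring s c) (hconn : G.Connected) {d : ℕ}
    (hdiam : ∀ u v, G.dist u v ≤ d) {u v : V} (hs : d ≤ s (c u)) (hcuv : c u = c v) :
    u = v := by
  by_contra hne
  have := hc u v hne hcuv (hconn.preconnected u v)
  have := hdiam u v
  omega

lemma exists_two_le_apply_of_triangle [DecidableEq V] (hc : G.IsSPackingColoring s c)
    (hs : ∀ i, 1 ≤ s i) {a b d : V} (hab : G.Adj a b) (hbd : G.Adj b d) (had : G.Adj a d) :
    ∃ x ∈ ({a, b, d} : Finset V), 2 ≤ (c x).val := by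
  have h₁ := Fin.val_ne_of_ne (hc.apply_ne_of_adj hab (hs _))
  have h₂ := Fin.val_ne_of_ne (hc.apply_ne_of_adj hbd (hs _))
  have h₃ := Fin.val_ne_of_ne (hc.apply_ne_of_adj had (hs _))
  by_contra! hlow
  have ha := hlow a (by simp)
  have hb := hlow b (by simp)
  have hd := hlow d (by simp)
  omega

end IsSPackingColoring

theorem not_sPacking_of_four_disjoint_triangles [DecidableEq V] (hconn : G.Connected)
    (hdiam : ∀ u v, G.dist u v ≤ 3) (T : Fin 4 → Finset V)
    (hdisj : ∀ i j, i ≠ j → Disjoint (T i) (T j))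
    (htri : ∀ i, ∃ a b c : V, T i = {a, b, c} ∧ G.Adj a b ∧ G.Adj b c ∧ G.Adj a c) :
    ¬ SPacking G 5 ![1, 1, 3, 3, 3] := by
  rintro ⟨c, hc⟩
  have hc : G.IsSPackingColoring ![1, 1, 3, 3, 3] c := hc
  have hhigh : ∀ i, ∃ t ∈ T i, 2 ≤ (c t).val := by
    intro i
    obtain ⟨a, b, d, hT, hab, hbd, had⟩ := htri i
    exact hT ▸ hc.exists_two_le_apply_of_triangle (by decide) hab hbd had
  choose t ht h2 using hhigh
  obtain ⟨i, j, hij, hcij⟩ := Fintype.exists_ne_map_eq_of_card_lt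
    (fun i ↦ (⟨c (t i), h2 i⟩ : {x : Fin 5 // 2 ≤ x.val})) (by decide)
  have hs : ∀ x : Fin 5, 2 ≤ x.val → 3 ≤ ![1, 1, 3, 3, 3] x := by decide
  have htij : t i = t j :=
    hc.eq_of_apply_eq hconn hdiam (hs _ (h2 i)) (congrArg Subtype.val hcij)
  exact Finset.disjoint_left.mp (hdisj i j hij) (ht i) (htij ▸ ht j)

lemma connected_and_dist_le_three_of_forall_exists [Nonempty V]
    (h : ∀ u v, ∃ w x, (u = w ∨ G.Adj u w) ∧ (w = x ∨ G.Adj w x) ∧ (x = v ∨ G.Adj x v)) :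
    G.Connected ∧ ∀ u v, G.dist u v ≤ 3 := by
  have hstep : ∀ {u v : V}, u = v ∨ G.Adj u v → G.Reachable u v ∧ G.dist u v ≤ 1 := by
    rintro u v (rfl | huv)
    · simp
    · exact ⟨huv.reachable, (dist_eq_one_iff_adj.mpr huv).le⟩
  have hconn : G.Connected := by
    refine (connected_iff G).mpr ⟨fun u v ↦ ?_, inferInstance⟩
    obtain ⟨w, x, huw, hwx, hxv⟩ := h u v
    exact (hstep huw).1.trans ((hstep hwx).1.trans (hstep hxv).1)
  refine ⟨hconn, fun u v ↦ ?_⟩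
  obtain ⟨w, x, huw, hwx, hxv⟩ := h u v
  calc G.dist u v ≤ G.dist u w + G.dist w v := hconn.dist_triangle
    _ ≤ G.dist u w + (G.dist w x + G.dist x v) := by gcongr; exact hconn.dist_triangle
    _ ≤ 1 + (1 + 1) := add_le_add (hstep huw).2 (add_le_add (hstep hwx).2 (hstep hxv).2)

/-- The vertex `(i, j)` is the corner, on the edge towards `j`, of the triangle that replaces
vertex `i` of `K₄`. -/
def truncatedTetrahedron : SimpleGraph {p : Fin 4 × Fin 4 // p.1 ≠ p.2} :=
  fromRel fun u v ↦ u.1.1 = v.1.1 ∨ u.1 = v.1.swap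

instance : DecidableRel truncatedTetrahedron.Adj := fun _ _ ↦
  decidable_of_iff' _ (fromRel_adj _ _ _)

lemma truncatedTetrahedron_degree (v : {p : Fin 4 × Fin 4 // p.1 ≠ p.2}) :
    truncatedTetrahedron.degree v = 3 := by
  revert v
  decide

lemma truncatedTetrahedron_connected_and_dist_le_three :
    truncatedTetrahedron.Connected ∧ ∀ u v, truncatedTetrahedron.dist u v ≤ 3 :=
  have : Nonempty {p : Fin 4 × Fin 4 // p.1 ≠ p.2} := ⟨⟨(0, 1), by decide⟩⟩
  connected_and_dist_le_three_of_forall_exists (by decide)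

lemma truncatedTetrahedron_exists_triangle (i : Fin 4) :
    ∃ a b c, ({v | v.1.1 = i} : Finset {p : Fin 4 × Fin 4 // p.1 ≠ p.2}) = {a, b, c} ∧
      truncatedTetrahedron.Adj a b ∧ truncatedTetrahedron.Adj b c ∧
      truncatedTetrahedron.Adj a c := by
  revert i
  decide

end SimpleGraph

open SimpleGraph in
theorem stmt_15 :
    (∀ (V : Type) [Fintype V] [DecidableEq V] (G : SimpleGraph V) [DecidableRel G.Adj],
      (∀ v, G.degree v = 3) → G.Connected → (∀ u v, G.dist u v ≤ 3) →
      (∃ T : Fin 4 → Finset V, (∀ i j, i ≠ j → Disjoint (T i) (T j)) ∧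
        ∀ i, ∃ a b c : V, T i = {a, b, c} ∧ G.Adj a b ∧ G.Adj b c ∧ G.Adj a c) →
      ¬ SPacking G 5 ![1, 1, 3, 3, 3]) ∧
    (∃ (V : Type) (_ : Fintype V) (G : SimpleGraph V) (_ : DecidableRel G.Adj),
      Fintype.card V = 12 ∧ (∀ v, G.degree v = 3) ∧
      ¬ SPacking G 5 ![1, 1, 3, 3, 3]) := by
  refine ⟨fun V _ _ G _ _ hconn hdiam ⟨T, hdisj, htri⟩ ↦
    not_sPacking_of_four_disjoint_triangles hconn hdiam T hdisj htri, ?_⟩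
  obtain ⟨hconn, hdiam⟩ := truncatedTetrahedron_connected_and_dist_le_three
  refine ⟨_, inferInstance, truncatedTetrahedron, inferInstance, by decide,
    truncatedTetrahedron_degree, ?_⟩
  refine not_sPacking_of_four_disjoint_triangles hconn hdiam (fun i ↦ {v | v.1.1 = i})
    (fun i j hij ↦ ?_) truncatedTetrahedron_exists_triangle
  exact Finset.disjoint_filter.mpr fun _ _ hi hj ↦ hij (hi ▸ hj)
end
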